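/- arXiv:1003.3576 — 2 statements merged into one kernel-verified Lean document; each statement's English description precedes it below -/
import Mathlib

section
/- Let q be a prime power and let g₁, g₂ be generators of the multiplicative group F_q^*. Then the set A = {(x, y) ∈ Z_{q−1} × Z_{q−1} : g₁^x + g₂^y = 1 in F_q} is a Sidon set in the additive group Z_{q−1} × Z_{q−1}. -/
/-!
Exponentiation `x ↦ g ^ x` by a generator `g` of `F_q^*` is an injective additive character
`Z_{q−1} → F_q`. Write `ψ₁, ψ₂` for the two characters. If `a - b = c - d = (s, t)`, then
`(X, Y) = (ψ₁ b.1, ψ₂ b.2)` and `(X, Y) = (ψ₁ d.1, ψ₂ d.2)` both lie on the two lines `X + Y = 1`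
and `ψ₁ s · X + ψ₂ t · Y = 1`. These lines are distinct because `(s, t) ≠ 0`, so they meet in at
most one point, whence `b = d` and then `a = c`.
-/

open Function

def IsSidon {G : Type*} [AddGroup G] (A : Set G) : Prop :=
  ∀ a ∈ A, ∀ b ∈ A, ∀ c ∈ A, ∀ d ∈ A, a - b = c - d → a - b ≠ 0 → a = c ∧ b = d

theorem eq_and_eq_of_add_eq_one_of_mul_add_mul_eq_one {K : Type*} [CommRing K] [IsDomain K]
    {u v x y x' y' : K} (huv : (u, v) ≠ (1, 1)) (h : x + y = 1) (h' : x' + y' = 1)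
    (hu : u * x + v * y = 1) (hu' : u * x' + v * y' = 1) : x = x' ∧ y = y' := by
  have hx : (u - v) * x = 1 - v := by linear_combination hu - v * h
  have hx' : (u - v) * x' = 1 - v := by linear_combination hu' - v * h'
  have huv' : u - v ≠ 0 := by
    intro h0
    rw [h0, zero_mul] at hx
    have hv : v = 1 := by linear_combination hx
    exact huv (Prod.ext (by linear_combination h0 + hv) hv)
  have hxx' : x = x' := mul_left_cancel₀ huv' (hx.trans hx'.symm)
  exact ⟨hxx', by linear_combination h - h' - hxx'⟩

theorem AddChar.isSidon_setOf_add_eq_one {G H K : Type*} [AddGroup G] [AddGroup H] [CommRing K]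
    [IsDomain K] {ψ : AddChar G K} {χ : AddChar H K} (hψ : Injective ψ) (hχ : Injective χ) :
    IsSidon {p : G × H | ψ p.1 + χ p.2 = 1} := by
  intro a ha b hb c hc d hd hac hne
  obtain ⟨s, rfl⟩ : ∃ s, a = s + b := ⟨a - b, (sub_add_cancel a b).symm⟩
  obtain rfl : c = s + d := by rw [← sub_add_cancel c d, ← hac, add_sub_cancel_right]
  rw [add_sub_cancel_right] at hne
  suffices b = d from ⟨congrArg (s + ·) this, this⟩
  have hst : (ψ s.1, χ s.2) ≠ (1, 1) := by
    intro h
    obtain ⟨h₁, h₂⟩ := Prod.mk.inj h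
    exact hne <| Prod.ext (hψ (h₁.trans ψ.map_zero_eq_one.symm))
      (hχ (h₂.trans χ.map_zero_eq_one.symm))
  simp only [Set.mem_ofPred_eq, Prod.fst_add, Prod.snd_add, map_add_eq_mul] at ha hb hc hd
  obtain ⟨h₁, h₂⟩ := eq_and_eq_of_add_eq_one_of_mul_add_mul_eq_one hst hb hd ha hc
  exact Prod.ext (hψ h₁) (hχ h₂)

theorem IsPrimitiveRoot.injective_zmodChar {M : Type*} [CommMonoid M] {n : ℕ} [NeZero n] {ζ : M}
    (h : IsPrimitiveRoot ζ n) : Injective (AddChar.zmodChar n h.pow_eq_one) :=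
  fun x y hxy ↦ ZMod.val_injective n (h.pow_inj x.val_lt y.val_lt hxy)

theorem isPrimitiveRoot_coe_of_forall_mem_zpowers {M : Type*} [CommMonoid M] {g : Mˣ}
    (hg : ∀ u : Mˣ, u ∈ Subgroup.zpowers g) : IsPrimitiveRoot (g : M) (Nat.card Mˣ) := by
  rw [IsPrimitiveRoot.coe_units_iff, ← orderOf_eq_card_of_forall_mem_zpowers hg]
  exact IsPrimitiveRoot.orderOf g

/-- Let `q` be a prime power and `g₁, g₂` generators of `F_q^*`. Then
`A = {(x,y) ∈ Z_{q−1} × Z_{q−1} : g₁^x + g₂^y = 1}` is a Sidon set in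
`Z_{q−1} × Z_{q−1}`. -/
theorem sidon_fermat_graph {F : Type*} [Field F] [Fintype F] {q : ℕ}
    (hq : Fintype.card F = q)
    (g₁ g₂ : Fˣ)
    (hg₁ : ∀ u : Fˣ, u ∈ Subgroup.zpowers g₁)
    (hg₂ : ∀ u : Fˣ, u ∈ Subgroup.zpowers g₂)
    (A : Set (ZMod (q - 1) × ZMod (q - 1)))
    (hAdef : A = {p : ZMod (q - 1) × ZMod (q - 1) |
      ((g₁ ^ p.1.val : Fˣ) : F) + ((g₂ ^ p.2.val : Fˣ) : F) = 1}) :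
    ∀ a ∈ A, ∀ b ∈ A, ∀ c ∈ A, ∀ d ∈ A,
      a - b = c - d → a - b ≠ 0 → a = c ∧ b = d := by
  have hcard : Nat.card Fˣ = q - 1 := by rw [Nat.card_units, Nat.card_eq_fintype_card, hq]
  have : NeZero (q - 1) := ⟨hcard ▸ Nat.card_pos.ne'⟩
  have hζ₁ : IsPrimitiveRoot (g₁ : F) (q - 1) := hcard ▸ isPrimitiveRoot_coe_of_forall_mem_zpowers hg₁
  have hζ₂ : IsPrimitiveRoot (g₂ : F) (q - 1) := hcard ▸ isPrimitiveRoot_coe_of_forall_mem_zpowers hg₂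
  have hA : A = {p | AddChar.zmodChar (q - 1) hζ₁.pow_eq_one p.1 +
      AddChar.zmodChar (q - 1) hζ₂.pow_eq_one p.2 = 1} := by
    simp only [hAdef, AddChar.zmodChar_apply, Units.val_pow_eq_pow_val]
  rw [hA]
  exact AddChar.isSidon_setOf_add_eq_one hζ₁.injective_zmodChar hζ₂.injective_zmodChar
end

section
/- Let G be a finite abelian group, let A ⊆ G be a Sidon set, and set δ = √|G| − |A|. Then for all subsets B, B′ ⊆ G with B′ nonempty, |A ∩ B| ≤ |A|·|B + B′|/|G| + (1 + max(0,δ)·|B′|/|G|) · √(|B + B′|/|B′|) · |G|^{1/4}, where B + B′ = {b + b′ : b ∈ B, b′ ∈ B′} is the sumset. -/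
/-!
Let `r(x)` count the representations `x = a + b'` with `a ∈ A`, `b' ∈ B'`. Its mean over `G` is
`|A||B'|/|G|`, and its second moment is the additive energy `E(A, B')`, which the Sidon property
caps at `|A||B'| + |B'|(|B'| - 1)`. Every `a ∈ A ∩ B` gives `|B'|` representations of elements of
`B + B'`, so `|A ∩ B| |B'| ≤ ∑_{B + B'} r`; Cauchy–Schwarz against the mean bounds this sum by
`|B + B'|` times the mean plus `√(|B + B'| · variance)`. The energy bound and `|A| ≤ √|G| + 1`
(the differences of distinct elements of `A` are distinct) give
`variance ≤ |B'| √|G| (1 + max(0, √|G| - |A|) |B'|/|G|)²`, an elementary real inequality.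
-/

open scoped Pointwise Combinatorics.Additive
open Finset

lemma sum_sub_sq_of_sum_eq {ι : Type*} [Fintype ι] {f : ι → ℝ} {m : ℝ}
    (h : ∑ i, f i = Fintype.card ι * m) :
    ∑ i, (f i - m) ^ 2 = ∑ i, f i ^ 2 - Fintype.card ι * m ^ 2 := by
  simp only [sub_sq, sum_add_distrib, sum_sub_distrib, ← sum_mul, ← mul_sum, h, sum_const,
    card_univ, nsmul_eq_mul]
  ring

lemma sum_le_card_mul_add_sqrt {ι : Type*} [Fintype ι] (s : Finset ι) (f : ι → ℝ) (m : ℝ) :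
    ∑ i ∈ s, f i ≤ #s * m + √(#s * ∑ i, (f i - m) ^ 2) := by
  have hcs : (∑ i ∈ s, (f i - m)) ^ 2 ≤ #s * ∑ i, (f i - m) ^ 2 :=
    sq_sum_le_card_mul_sum_sq.trans <| mul_le_mul_of_nonneg_left
      (sum_le_sum_of_subset_of_nonneg (subset_univ s) fun _ _ _ => sq_nonneg _) (by positivity)
  have := (le_abs_self _).trans (Real.abs_le_sqrt hcs)
  rw [sum_sub_distrib, sum_const, nsmul_eq_mul] at this
  linarith

lemma sqrt_sqrt_eq_rpow {x : ℝ} (hx : 0 ≤ x) : √(√x) = x ^ ((1 : ℝ) / 4) := by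
  rw [show (1 : ℝ) / 4 = 1 / 2 / 2 by norm_num, Real.rpow_div_two_eq_sqrt _ hx,
    Real.sqrt_eq_rpow]

lemma add_sub_one_sub_sq_mul_div_le {a r s : ℝ} (hr : 0 < r) (hs : 0 ≤ s) (har : a ≤ r + 1) :
    a + s - 1 - a ^ 2 * s / r ^ 2 ≤ r * (1 + max 0 (r - a) * s / r ^ 2) ^ 2 := by
  set d := max 0 (r - a)
  have hd : 0 ≤ d := le_max_left _ _
  have hprod : (r - a) * (r + a) ≤ 2 * r * d := by
    rcases le_total a r with h | h
    · nlinarith [le_max_right 0 (r - a)]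
    · nlinarith
  calc a + s - 1 - a ^ 2 * s / r ^ 2 = (a - 1) + s * ((r - a) * (r + a)) / r ^ 2 := by
        field_simp; ring
    _ ≤ r + s * (2 * r * d) / r ^ 2 := by gcongr; linarith
    _ ≤ r * (1 + d * s / r ^ 2) ^ 2 := by
        field_simp
        nlinarith [sq_nonneg (s * d)]

section AddCommGroup

variable {G : Type*} [AddCommGroup G]

def IsSidonSet (A : Finset G) : Prop :=
  ∀ a ∈ A, ∀ b ∈ A, ∀ c ∈ A, ∀ d ∈ A, a - b = c - d → a - b ≠ 0 → a = c ∧ b = d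

section repCount

variable [DecidableEq G]

def repCount (A B : Finset G) (x : G) : ℕ := #{p ∈ A ×ˢ B | p.1 + p.2 = x}

lemma sum_repCount [Fintype G] (A B : Finset G) : ∑ x, repCount A B x = #A * #B := by
  rw [← card_product]
  exact (card_eq_sum_card_fiberwise fun _ _ => mem_coe.2 (mem_univ _)).symm

lemma sum_repCount_sq [Fintype G] (A B : Finset G) : ∑ x, repCount A B x ^ 2 = E[A, B] :=
  (addEnergy_eq_sum_sq A B).symm

lemma card_inter_mul_card_le_sum_repCount (A B B' : Finset G) :
    #(A ∩ B) * #B' ≤ ∑ x ∈ B + B', repCount A B' x := by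
  rw [← card_product]
  simp only [repCount]
  rw [sum_card_fiberwise_eq_card_filter]
  refine card_le_card fun p hp => ?_
  obtain ⟨⟨hpA, hpB⟩, hpB'⟩ := by simpa only [mem_product, mem_inter] using hp
  exact mem_filter.2 ⟨mem_product.2 ⟨hpA, hpB'⟩, add_mem_add hpB hpB'⟩

end repCount

namespace IsSidonSet

variable {A : Finset G} (hA : IsSidonSet A)
include hA

lemma card_offDiag_le [Fintype G] : #A.offDiag ≤ Fintype.card G := by
  refine card_le_card_of_injOn (fun p => p.1 - p.2) (fun _ _ => mem_univ _) ?_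
  rintro ⟨a, b⟩ hab ⟨c, d⟩ hcd h
  simp only [coe_offDiag, Set.mem_offDiag, mem_coe] at hab hcd
  obtain ⟨rfl, rfl⟩ := hA a hab.1 b hab.2.1 c hcd.1 d hcd.2.1 h (sub_ne_zero.2 hab.2.2)
  rfl

lemma card_le_sqrt_card_add_one [Fintype G] : (#A : ℝ) ≤ √(Fintype.card G) + 1 := by
  have h : (#A : ℝ) * #A ≤ Fintype.card G + #A := by
    have := hA.card_offDiag_le
    rw [offDiag_card] at this
    exact_mod_cast (by omega : #A * #A ≤ Fintype.card G + #A)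
  have hn : (0 : ℝ) ≤ Fintype.card G := Nat.cast_nonneg _
  nlinarith [Real.sq_sqrt hn, Real.sqrt_nonneg (Fintype.card G : ℝ)]

/-- A quadruple with `a₁ ≠ a₂` is determined by `(b₁, b₂)`, since `a₁ - a₂ = b₂ - b₁`. -/
lemma addEnergy_le [DecidableEq G] (B : Finset G) : E[A, B] ≤ #A * #B + #B.offDiag := by
  rw [addEnergy, ← card_filter_add_card_filter_not (fun x => x.1.1 = x.1.2),
    filter_filter, filter_filter, ← card_product]
  gcongr
  · refine card_le_card_of_injOn (fun x => (x.1.1, x.2.1)) ?_ ?_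
    · intro x hx
      simp only [coe_filter, mem_product, Set.mem_ofPred_eq, mem_coe] at hx ⊢
      exact ⟨hx.1.1.1, hx.1.2.1⟩
    · rintro ⟨⟨a₁, a₂⟩, b₁, b₂⟩ hx ⟨⟨a₁', a₂'⟩, b₁', b₂'⟩ hx' h
      simp only [coe_filter, mem_product, Set.mem_ofPred_eq, Prod.mk.injEq] at hx hx' h ⊢
      obtain ⟨rfl, rfl⟩ := h
      obtain ⟨_, hsum, rfl⟩ := hx
      obtain ⟨_, hsum', rfl⟩ := hx'
      exact ⟨⟨rfl, rfl⟩, rfl, (add_left_cancel hsum).symm.trans (add_left_cancel hsum')⟩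
  · refine card_le_card_of_injOn (fun x => x.2) ?_ ?_
    · intro x hx
      simp only [coe_filter, mem_product, Set.mem_ofPred_eq, mem_coe, mem_offDiag] at hx ⊢
      refine ⟨hx.1.2.1, hx.1.2.2, fun h => hx.2.2 ?_⟩
      rw [h] at hx
      exact add_right_cancel hx.2.1
    · rintro ⟨⟨a₁, a₂⟩, b₁, b₂⟩ hx ⟨⟨a₁', a₂'⟩, b₁', b₂'⟩ hx' h
      simp only [coe_filter, mem_product, Set.mem_ofPred_eq, Prod.mk.injEq] at hx hx' h
      obtain ⟨rfl, rfl⟩ := h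
      have hdiff : a₁ - a₂ = a₁' - a₂' :=
        (sub_eq_sub_iff_add_eq_add.2 (hx.2.1.trans (add_comm _ _))).trans
          (sub_eq_sub_iff_add_eq_add.2 (hx'.2.1.trans (add_comm _ _))).symm
      obtain ⟨rfl, rfl⟩ :=
        hA _ hx.1.1.1 _ hx.1.1.2 _ hx'.1.1.1 _ hx'.1.1.2 hdiff (sub_ne_zero.2 hx.2.2)
      rfl

lemma sum_repCount_sub_mean_sq_le [Fintype G] [DecidableEq G] (B : Finset G) :
    ∑ x, ((repCount A B x : ℝ) - #A * #B / Fintype.card G) ^ 2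
      ≤ #B * (√(Fintype.card G)
        * (1 + max 0 (√(Fintype.card G) - #A) * #B / Fintype.card G) ^ 2) := by
  have hsum : ∑ x, (repCount A B x : ℝ) = #A * #B := by exact_mod_cast sum_repCount A B
  have hsumsq : ∑ x, (repCount A B x : ℝ) ^ 2 + #B ≤ #A * #B + #B * #B := by
    have := hA.addEnergy_le B
    rw [offDiag_card, ← sum_repCount_sq] at this
    exact_mod_cast (by have := Nat.le_mul_self #B; omega :
      ∑ x, repCount A B x ^ 2 + #B ≤ #A * #B + #B * #B)
  have ha := hA.card_le_sqrt_card_add_one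
  set n : ℝ := (Fintype.card G : ℝ)
  set a : ℝ := (#A : ℝ)
  set s : ℝ := (#B : ℝ)
  have hn : 0 < n := Nat.cast_pos.2 Fintype.card_pos
  have hs : 0 ≤ s := Nat.cast_nonneg _
  have key := add_sub_one_sub_sq_mul_div_le (Real.sqrt_pos.2 hn) hs ha
  rw [Real.sq_sqrt hn.le] at key
  rw [sum_sub_sq_of_sum_eq (by rw [hsum, mul_div_cancel₀ _ hn.ne'] : _ = n * (a * s / n))]
  calc ∑ x, (repCount A B x : ℝ) ^ 2 - n * (a * s / n) ^ 2
      ≤ s * (a + s - 1 - a ^ 2 * s / n) := by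
        have : n * (a * s / n) ^ 2 = s * (a ^ 2 * s / n) := by field_simp
        linarith
    _ ≤ s * (√n * (1 + max 0 (√n - a) * s / n) ^ 2) := by gcongr

end IsSidonSet

end AddCommGroup

/-- Let `G` be a finite abelian group, `A ⊆ G` a Sidon set,
`δ = √|G| − |A|`. Then for all `B, B' ⊆ G` with `B'` nonempty,
`|A ∩ B| ≤ |A|·|B+B'|/|G| + (1 + max(0,δ)·|B'|/|G|)·√(|B+B'|/|B'|)·|G|^{1/4}`. -/
theorem sidon_cap_bound {G : Type*} [AddCommGroup G] [Fintype G] [DecidableEq G]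
    (A : Finset G)
    (hA : ∀ a ∈ A, ∀ b ∈ A, ∀ c ∈ A, ∀ d ∈ A,
      a - b = c - d → a - b ≠ 0 → a = c ∧ b = d)
    (B B' : Finset G) (hB' : B'.Nonempty) :
    ((A ∩ B).card : ℝ)
      ≤ (A.card : ℝ) * ((B + B').card : ℝ) / (Fintype.card G : ℝ)
        + (1 + max 0 (Real.sqrt (Fintype.card G) - (A.card : ℝ)) * (B'.card : ℝ)
              / (Fintype.card G : ℝ))
          * Real.sqrt (((B + B').card : ℝ) / (B'.card : ℝ))
          * (Fintype.card G : ℝ) ^ ((1 : ℝ) / 4) := by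
  have hk : (#(A ∩ B) : ℝ) * #B' ≤ ∑ x ∈ B + B', (repCount A B' x : ℝ) := by
    exact_mod_cast card_inter_mul_card_le_sum_repCount A B B'
  have hvar := IsSidonSet.sum_repCount_sub_mean_sq_le hA B'
  set n : ℝ := (Fintype.card G : ℝ)
  set s : ℝ := (#B' : ℝ)
  set S : ℝ := (#(B + B') : ℝ)
  set c := 1 + max 0 (√n - #A) * s / n
  have hn : 0 < n := Nat.cast_pos.2 Fintype.card_pos
  have hs : 0 < s := Nat.cast_pos.2 hB'.card_pos
  have hsqrt : √(S * (s * (√n * c ^ 2))) = s * (c * √(S / s) * n ^ ((1 : ℝ) / 4)) := by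
    rw [← sqrt_sqrt_eq_rpow hn.le, show S * (s * (√n * c ^ 2)) = (s * c) ^ 2 * (S / s * √n) by
      field_simp, Real.sqrt_mul (by positivity), Real.sqrt_sq (by positivity),
      Real.sqrt_mul (by positivity)]
    ring
  refine le_of_mul_le_mul_right ?_ hs
  calc #(A ∩ B) * s ≤ ∑ x ∈ B + B', (repCount A B' x : ℝ) := hk
    _ ≤ S * (#A * s / n) + √(S * ∑ x, ((repCount A B' x : ℝ) - #A * s / n) ^ 2) :=
        sum_le_card_mul_add_sqrt _ _ _
    _ ≤ S * (#A * s / n) + √(S * (s * (√n * c ^ 2))) := by gcongr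
    _ = (#A * S / n + c * √(S / s) * n ^ ((1 : ℝ) / 4)) * s := by rw [hsqrt]; ring
end
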